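/- The map φ(X, ξ) := (φ^B(A, ξ_B), b_B + β, P_A⁻¹ T B, (P_B T B (Q_i⁻¹ ((P_B T)⁻¹ p_i)))), for X = (A, β, B, (Q_i)) ∈ G = SE₂(3) × ℝ⁶ × SE(3) × SOT(3)ⁿ and ξ = (ξ_B, b_B, T, (p_i)) in the VI-SLAM total space 𝒯, is a right group action of G on 𝒯: φ(X, ξ) ∈ 𝒯, φ(Id, ξ) = ξ, and φ(X₁X₂, ξ) = φ(X₂, φ(X₁, ξ)) for all X₁, X₂ ∈ G and ξ ∈ 𝒯. -/

import Mathlib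

noncomputable section
open Matrix

abbrev Mat3 := Matrix (Fin 3) (Fin 3) ℝ
abbrev Vec3 := EuclideanSpace ℝ (Fin 3)
abbrev Vec6 := EuclideanSpace ℝ (Fin 6)

/-- Membership in `SO(3)`. -/
def SO3 (R : Mat3) : Prop := Rᵀ * R = 1 ∧ R.det = 1

/-- The standard gravity direction `e₃ = (0,0,1)`. -/
def e3 : Vec3 := WithLp.toLp 2 (![0, 0, 1] : Fin 3 → ℝ)

/-- Matrix-vector multiplication on `ℝ³`. -/
def mulv (M : Mat3) (v : Vec3) : Vec3 := WithLp.toLp 2 (M.mulVec v)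

/-- `SE(3)` elements as (rotation, translation) pairs `(R_P, x_P)`. -/
abbrev SE3 := Mat3 × Vec3
def SE3.mul (P Q : SE3) : SE3 := (P.1 * Q.1, P.2 + mulv P.1 Q.2)
def SE3.one : SE3 := (1, 0)
def SE3.inv (P : SE3) : SE3 := (P.1ᵀ, -(mulv P.1ᵀ P.2))
/-- The action of `SE(3)` on `ℝ³`: `P p = R_P p + x_P`. -/
def SE3.act (P : SE3) (p : Vec3) : Vec3 := mulv P.1 p + P.2

/-- Membership in `SE_{e₃}(3) := {(R,x) ∈ SE(3) | R e₃ = e₃}`. -/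
def SEe3 (S : SE3) : Prop := SO3 S.1 ∧ mulv S.1 e3 = e3

/-- `SOT(3)` elements as pairs `(R_Q, c_Q)`. -/
abbrev SOT3 := Mat3 × ℝ
def SOT3.mem (Q : SOT3) : Prop := SO3 Q.1 ∧ 0 < Q.2
def SOT3.mul (Q₁ Q₂ : SOT3) : SOT3 := (Q₁.1 * Q₂.1, Q₁.2 * Q₂.2)
def SOT3.one : SOT3 := (1, 1)
def SOT3.inv (Q : SOT3) : SOT3 := (Q.1ᵀ, Q.2⁻¹)
/-- The action of `SOT(3)` on `ℝ³`: `Q p = c_Q R_Q p`. -/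
def SOT3.act (Q : SOT3) (p : Vec3) : Vec3 := Q.2 • mulv Q.1 p

/-- `SE₂(3)` elements as triples `(R_A, x_A, v_A)`. -/
abbrev SE23 := Mat3 × Vec3 × Vec3
def SE23.mem (A : SE23) : Prop := SO3 A.1
def SE23.mul (A₁ A₂ : SE23) : SE23 :=
  (A₁.1 * A₂.1, A₁.2.1 + mulv A₁.1 A₂.2.1, A₁.2.2 + mulv A₁.1 A₂.2.2)
def SE23.one : SE23 := (1, 0, 0)
/-- The pose component `P_A = (R_A, x_A)` of `A = (P_A, v_A) ∈ SE₂(3)`. -/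
def SE23.P (A : SE23) : SE3 := (A.1, A.2.1)

/-- A point of the ambient VI-SLAM state space with `n` landmarks. -/
structure VIState (n : ℕ) where
  P : SE3            -- pose of the IMU `(R_B, x_B)`
  v : Vec3           -- linear velocity `v_B`
  b : Vec6           -- IMU bias `b_B`
  T : SE3            -- camera extrinsics
  p : Fin n → Vec3   -- landmark positions

/-- Membership in the VI-SLAM total space `𝒯`. -/
def VIState.mem {n : ℕ} (ξ : VIState n) : Prop :=
  SO3 ξ.P.1 ∧ SO3 ξ.T.1 ∧ ∀ i, SE3.act (SE3.inv (SE3.mul ξ.P ξ.T)) (ξ.p i) ≠ 0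

/-- An element `X = (A, β, B, (Q_i))` of the group `G = SE₂(3) × ℝ⁶ × SE(3) × SOT(3)ⁿ`. -/
structure GElem (n : ℕ) where
  A : SE23
  β : Vec6
  B : SE3
  Q : Fin n → SOT3

def GElem.mem {n : ℕ} (X : GElem n) : Prop :=
  SE23.mem X.A ∧ SO3 X.B.1 ∧ ∀ i, SOT3.mem (X.Q i)

/-- Componentwise product on `G`. -/
def GElem.mul {n : ℕ} (X₁ X₂ : GElem n) : GElem n :=
  ⟨SE23.mul X₁.A X₂.A, X₁.β + X₂.β, SE3.mul X₁.B X₂.B, fun i => SOT3.mul (X₁.Q i) (X₂.Q i)⟩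

def GElem.one (n : ℕ) : GElem n := ⟨SE23.one, 0, SE3.one, fun _ => SOT3.one⟩

/-- The group action
`φ(X, ξ) := (φ^B(A, ξ_B), b_B + β, P_A⁻¹ T B, (P_B T B (Q_i⁻¹ ((P_B T)⁻¹ p_i))))`. -/
def phi {n : ℕ} (X : GElem n) (ξ : VIState n) : VIState n :=
  ⟨SE3.mul ξ.P (SE23.P X.A), ξ.v + mulv ξ.P.1 X.A.2.2, ξ.b + X.β,
   SE3.mul (SE3.mul (SE3.inv (SE23.P X.A)) ξ.T) X.B,
   fun i => SE3.act (SE3.mul (SE3.mul ξ.P ξ.T) X.B)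
     (SOT3.act (SOT3.inv (X.Q i)) (SE3.act (SE3.inv (SE3.mul ξ.P ξ.T)) (ξ.p i)))⟩
/-!
Write `C := P_B T` for the camera pose and `y_i := C⁻¹ p_i` for the landmarks in camera
coordinates. Since `(P_B P_A)(P_A⁻¹ T B) = C B`, the action `φ` sends `C ↦ C B` and
`y_i ↦ Q_i⁻¹ y_i`, and rebuilds `p_i = C y_i`; on the remaining components it is the right
translation `ξ_B ↦ ξ_B A` and `b_B ↦ b_B + β`. Each of these is a right action of the
corresponding factor of `G`, and `y_i ≠ 0` is preserved because `Q_i⁻¹` is invertible.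
-/

lemma mulv_mul (M N : Mat3) (v : Vec3) : mulv (M * N) v = mulv M (mulv N v) := by
  simp [mulv, Matrix.mulVec_mulVec]

lemma mulv_one (v : Vec3) : mulv 1 v = v := by
  simp [mulv]

lemma mulv_add (M : Mat3) (v w : Vec3) : mulv M (v + w) = mulv M v + mulv M w := by
  simp [mulv, Matrix.mulVec_add]

lemma mulv_zero (M : Mat3) : mulv M 0 = 0 := by
  simp [mulv]

lemma mulv_neg (M : Mat3) (v : Vec3) : mulv M (-v) = -mulv M v := by
  simp [mulv, Matrix.mulVec_neg]

lemma mulv_smul (M : Mat3) (c : ℝ) (v : Vec3) : mulv M (c • v) = c • mulv M v := by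
  simp [mulv, Matrix.mulVec_smul]

lemma SO3.mem_orthogonalGroup {R : Mat3} (h : SO3 R) : R ∈ orthogonalGroup (Fin 3) ℝ :=
  (mem_orthogonalGroup_iff' _ _).mpr h.1

lemma transpose_mem_orthogonalGroup {R : Mat3} (h : R ∈ orthogonalGroup (Fin 3) ℝ) :
    Rᵀ ∈ orthogonalGroup (Fin 3) ℝ := by
  rw [mem_orthogonalGroup_iff', transpose_transpose]
  exact (mem_orthogonalGroup_iff _ _).mp h

lemma SO3.mul {R S : Mat3} (hR : SO3 R) (hS : SO3 S) : SO3 (R * S) :=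
  ⟨(mem_orthogonalGroup_iff' _ _).mp (mul_mem hR.mem_orthogonalGroup hS.mem_orthogonalGroup),
    by rw [det_mul, hR.2, hS.2, one_mul]⟩

lemma SO3.transpose {R : Mat3} (h : SO3 R) : SO3 Rᵀ :=
  ⟨(mem_orthogonalGroup_iff' _ _).mp (transpose_mem_orthogonalGroup h.mem_orthogonalGroup),
    by rw [det_transpose, h.2]⟩

namespace SE3

variable {P : SE3}

lemma mul_assoc (P Q S : SE3) : mul (mul P Q) S = mul P (mul Q S) := by
  simp only [mul, mulv_mul, mulv_add, Matrix.mul_assoc, add_assoc]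

lemma one_mul (P : SE3) : mul one P = P := by
  simp only [mul, one, mulv_one, Matrix.one_mul, zero_add]

lemma mul_one (P : SE3) : mul P one = P := by
  simp only [mul, one, mulv_zero, Matrix.mul_one, add_zero]

lemma inv_one : inv one = one := by
  simp only [inv, one, transpose_one, mulv_zero, neg_zero]

lemma mul_inv_cancel (h : P.1 ∈ orthogonalGroup (Fin 3) ℝ) : mul P (inv P) = one := by
  simp only [mul, inv, one, (mem_orthogonalGroup_iff _ _).mp h, mulv_neg, ← mulv_mul, mulv_one,
    add_neg_cancel]

lemma inv_mul_cancel (h : P.1 ∈ orthogonalGroup (Fin 3) ℝ) : mul (inv P) P = one := by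
  simp only [mul, inv, one, (mem_orthogonalGroup_iff' _ _).mp h, neg_add_cancel]

lemma inv_mul_rev (P Q : SE3) (h : P.1 ∈ orthogonalGroup (Fin 3) ℝ) :
    inv (mul P Q) = mul (inv Q) (inv P) := by
  simp only [inv, mul, transpose_mul, mulv_add, mulv_mul, mulv_neg,
    ← mulv_mul P.1ᵀ P.1, (mem_orthogonalGroup_iff' _ _).mp h, mulv_one, Prod.mk.injEq, true_and]
  abel

lemma act_mul (P Q : SE3) (p : Vec3) : act (mul P Q) p = act P (act Q p) := by
  simp only [act, mul, mulv_mul, mulv_add]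
  abel

lemma act_one (p : Vec3) : act one p = p := by
  simp only [act, one, mulv_one, add_zero]

lemma act_act_inv (h : P.1 ∈ orthogonalGroup (Fin 3) ℝ) (p : Vec3) :
    act P (act (inv P) p) = p := by
  rw [← act_mul, mul_inv_cancel h, act_one]

lemma act_inv_act (h : P.1 ∈ orthogonalGroup (Fin 3) ℝ) (p : Vec3) :
    act (inv P) (act P p) = p := by
  rw [← act_mul, inv_mul_cancel h, act_one]

end SE3

namespace SOT3

lemma act_inv_one (p : Vec3) : act (inv one) p = p := by
  simp only [act, inv, one, transpose_one, mulv_one, inv_one, one_smul]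

lemma act_inv_mul (Q₁ Q₂ : SOT3) (p : Vec3) :
    act (inv (mul Q₁ Q₂)) p = act (inv Q₂) (act (inv Q₁) p) := by
  simp only [act, inv, mul, transpose_mul, mulv_mul, mulv_smul, mul_inv, smul_smul, mul_comm]

lemma act_inv_ne_zero {Q : SOT3} (hR : Q.1 ∈ orthogonalGroup (Fin 3) ℝ) (hc : Q.2 ≠ 0)
    {p : Vec3} (hp : p ≠ 0) : act (inv Q) p ≠ 0 := by
  have hRRt : mulv Q.1 (mulv Q.1ᵀ p) = p := by
    rw [← mulv_mul, (mem_orthogonalGroup_iff _ _).mp hR, mulv_one]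
  intro h
  rcases smul_eq_zero.mp h with h | h
  · exact inv_ne_zero hc h
  · exact hp (by rw [← hRRt, show mulv Q.1ᵀ p = 0 from h, mulv_zero])

end SOT3

attribute [ext] VIState

namespace VIState

variable {n : ℕ}

def camPose (ξ : VIState n) : SE3 := SE3.mul ξ.P ξ.T

def camPoint (ξ : VIState n) (i : Fin n) : Vec3 := SE3.act (SE3.inv ξ.camPose) (ξ.p i)

lemma act_camPose_camPoint (ξ : VIState n) (h : ξ.camPose.1 ∈ orthogonalGroup (Fin 3) ℝ)
    (i : Fin n) : SE3.act ξ.camPose (ξ.camPoint i) = ξ.p i :=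
  SE3.act_act_inv h _

end VIState

open VIState

variable {n : ℕ}

lemma phi_p (X : GElem n) (ξ : VIState n) (i : Fin n) :
    (phi X ξ).p i = SE3.act (SE3.mul ξ.camPose X.B) (SOT3.act (SOT3.inv (X.Q i)) (ξ.camPoint i)) :=
  rfl

lemma camPose_phi (X : GElem n) (ξ : VIState n) (hA : X.A.1 ∈ orthogonalGroup (Fin 3) ℝ) :
    (phi X ξ).camPose = SE3.mul ξ.camPose X.B := by
  simp only [camPose, phi, SE3.mul_assoc]
  rw [← SE3.mul_assoc (SE23.P X.A), SE3.mul_inv_cancel (P := SE23.P X.A) hA, SE3.one_mul]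

lemma camPoint_phi (X : GElem n) (ξ : VIState n) (hA : X.A.1 ∈ orthogonalGroup (Fin 3) ℝ)
    (hCB : (SE3.mul ξ.camPose X.B).1 ∈ orthogonalGroup (Fin 3) ℝ) (i : Fin n) :
    (phi X ξ).camPoint i = SOT3.act (SOT3.inv (X.Q i)) (ξ.camPoint i) := by
  rw [camPoint, camPose_phi X ξ hA, phi_p, SE3.act_inv_act hCB]

lemma phi_mem {X : GElem n} {ξ : VIState n} (hX : X.mem) (hξ : ξ.mem) : (phi X ξ).mem := by
  obtain ⟨hA, hB, hQ⟩ := hX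
  obtain ⟨hP, hT, hp⟩ := hξ
  have hCB : SO3 (SE3.mul ξ.camPose X.B).1 := (hP.mul hT).mul hB
  refine ⟨hP.mul hA, (hA.transpose.mul hT).mul hB, fun i => ?_⟩
  show (phi X ξ).camPoint i ≠ 0
  rw [camPoint_phi X ξ hA.mem_orthogonalGroup hCB.mem_orthogonalGroup]
  exact SOT3.act_inv_ne_zero (hQ i).1.mem_orthogonalGroup (hQ i).2.ne' (hp i)

lemma phi_one {ξ : VIState n} (hP : ξ.P.1 ∈ orthogonalGroup (Fin 3) ℝ)
    (hT : ξ.T.1 ∈ orthogonalGroup (Fin 3) ℝ) : phi (GElem.one n) ξ = ξ := by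
  have hC : ξ.camPose.1 ∈ orthogonalGroup (Fin 3) ℝ := mul_mem hP hT
  ext1
  · exact SE3.mul_one ξ.P
  · simp only [phi, GElem.one, SE23.one, mulv_zero, add_zero]
  · exact add_zero _
  · show SE3.mul (SE3.mul (SE3.inv SE3.one) ξ.T) SE3.one = ξ.T
    rw [SE3.mul_one, SE3.inv_one, SE3.one_mul]
  · funext i
    rw [phi_p]
    exact (congrArg₂ _ (SE3.mul_one _) (SOT3.act_inv_one _)).trans (act_camPose_camPoint ξ hC i)

lemma phi_mul {X₁ : GElem n} (X₂ : GElem n) {ξ : VIState n}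
    (hA₁ : X₁.A.1 ∈ orthogonalGroup (Fin 3) ℝ) (hB₁ : X₁.B.1 ∈ orthogonalGroup (Fin 3) ℝ)
    (hP : ξ.P.1 ∈ orthogonalGroup (Fin 3) ℝ) (hT : ξ.T.1 ∈ orthogonalGroup (Fin 3) ℝ) :
    phi (GElem.mul X₁ X₂) ξ = phi X₂ (phi X₁ ξ) := by
  have hCB : (SE3.mul ξ.camPose X₁.B).1 ∈ orthogonalGroup (Fin 3) ℝ := mul_mem (mul_mem hP hT) hB₁
  ext1
  · exact (SE3.mul_assoc ξ.P (SE23.P X₁.A) (SE23.P X₂.A)).symm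
  · show ξ.v + mulv ξ.P.1 (X₁.A.2.2 + mulv X₁.A.1 X₂.A.2.2)
      = ξ.v + mulv ξ.P.1 X₁.A.2.2 + mulv (ξ.P.1 * X₁.A.1) X₂.A.2.2
    rw [mulv_add, mulv_mul, add_assoc]
  · exact (add_assoc _ _ _).symm
  · show SE3.mul (SE3.mul (SE3.inv (SE3.mul (SE23.P X₁.A) (SE23.P X₂.A))) ξ.T) (SE3.mul X₁.B X₂.B)
      = SE3.mul (SE3.mul (SE3.inv (SE23.P X₂.A))
          (SE3.mul (SE3.mul (SE3.inv (SE23.P X₁.A)) ξ.T) X₁.B)) X₂.B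
    simp only [SE3.inv_mul_rev (SE23.P X₁.A) _ hA₁, SE3.mul_assoc]
  · funext i
    rw [phi_p, phi_p X₂, camPose_phi X₁ ξ hA₁, camPoint_phi X₁ ξ hA₁ hCB]
    exact congrArg₂ SE3.act (SE3.mul_assoc _ _ _).symm (SOT3.act_inv_mul _ _ _)

theorem phi_right_group_action_general (n : ℕ) :
    (∀ (X : GElem n) (ξ : VIState n), X.mem → ξ.mem → (phi X ξ).mem) ∧
    (∀ ξ : VIState n, ξ.mem → phi (GElem.one n) ξ = ξ) ∧
    (∀ (X₁ X₂ : GElem n) (ξ : VIState n), X₁.mem → X₂.mem → ξ.mem →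
      phi (GElem.mul X₁ X₂) ξ = phi X₂ (phi X₁ ξ)) :=
  ⟨fun _ _ hX hξ => phi_mem hX hξ,
    fun _ hξ => phi_one hξ.1.mem_orthogonalGroup hξ.2.1.mem_orthogonalGroup,
    fun _ X₂ _ hX₁ _ hξ => phi_mul X₂ hX₁.1.mem_orthogonalGroup hX₁.2.1.mem_orthogonalGroup
      hξ.1.mem_orthogonalGroup hξ.2.1.mem_orthogonalGroup⟩

/-- `φ` is a right group action of `G = SE₂(3) × ℝ⁶ × SE(3) × SOT(3)ⁿ`
on the VI-SLAM total space `𝒯`: it maps `𝒯` to `𝒯`, the identity acts trivially, and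
`φ(X₁X₂, ξ) = φ(X₂, φ(X₁, ξ))`. -/
theorem phi_right_group_action (n : ℕ) (hn : 1 ≤ n) :
    (∀ (X : GElem n) (ξ : VIState n), X.mem → ξ.mem → (phi X ξ).mem) ∧
    (∀ ξ : VIState n, ξ.mem → phi (GElem.one n) ξ = ξ) ∧
    (∀ (X₁ X₂ : GElem n) (ξ : VIState n), X₁.mem → X₂.mem → ξ.mem →
      phi (GElem.mul X₁ X₂) ξ = phi X₂ (phi X₁ ξ)) :=
  phi_right_group_action_general n
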